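/- arXiv:1906.08262 — 4 statements merged into one kernel-verified Lean document; each statement's English description precedes it below -/
import Mathlib

section
/- Let n be a positive integer, κ : Fin n → Fin n → Fin n → ℝ symmetric under all permutations of its indices, and t : Fin n → ℝ. Define τ i := (1/2)·∑_{j,k} κ i j k · t j · t k, 𝒱 := (1/6)·∑_{i,j,k} κ i j k · t i · t j · t k, and M i j := 4·τ i·τ j − 4·𝒱·∑_k κ i j k · t k. Assume 𝒱 > 0 and that M is positive semidefinite, i.e. ∑_{i,j} v i · M i j · v j ≥ 0 for all v : Fin n → ℝ. Then for every Σ : Fin n → ℝ, ∑_i τ i · Σ i ≤ (√3/2)·√(∑_{i,j} Σ i · M i j · Σ j). (Physically: a Euclidean D3-brane wrapping an effective or anti-effective divisor class Σ, with action Re S_Σ = 2π·∑τ_iΣ_i and WGC norm ‖Σ‖ = 2π·√(ΣᵀMΣ), always satisfies the instanton Weak Gravity Conjecture bound Re S_Σ ≤ c·‖Σ‖ with c = √3/2.) -/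
/-- Calibrated (anti-)effective divisor classes always satisfy the instanton WGC bound
with `c = √3/2`: if `𝒱 > 0` and `M` is positive semidefinite, then for every `Σ`,
`∑ τ i Σ i ≤ (√3/2)·√(Σᵀ M Σ)`. -/
theorem wgc_bound_for_calibrated (n : ℕ) (hn : 0 < n) (κ : Fin n → Fin n → Fin n → ℝ)
    (hκ1 : ∀ i j k, κ i j k = κ j i k) (hκ2 : ∀ i j k, κ i j k = κ i k j)
    (t : Fin n → ℝ) (τ : Fin n → ℝ) (𝒱 : ℝ) (M : Fin n → Fin n → ℝ)
    (hτ : ∀ i, τ i = (1/2) * ∑ j, ∑ k, κ i j k * t j * t k)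
    (h𝒱 : 𝒱 = (1/6) * ∑ i, ∑ j, ∑ k, κ i j k * t i * t j * t k)
    (hM : ∀ i j, M i j = 4 * τ i * τ j - 4 * 𝒱 * ∑ k, κ i j k * t k)
    (h𝒱pos : 0 < 𝒱)
    (hpsd : ∀ v : Fin n → ℝ, 0 ≤ ∑ i, ∑ j, v i * M i j * v j) :
    ∀ Q : Fin n → ℝ,
      ∑ i, τ i * Q i ≤ (Real.sqrt 3 / 2) * Real.sqrt (∑ i, ∑ j, Q i * M i j * Q j) := by
  intro Q
  -- ∑ τ t = 3𝒱
  have hτt : ∑ i, τ i * t i = 3 * 𝒱 := by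
    have h : ∑ i, τ i * t i = (1/2) * ∑ i, ∑ j, ∑ k, κ i j k * t i * t j * t k := by
      simp only [hτ, Finset.mul_sum, Finset.sum_mul]
      exact Finset.sum_congr rfl fun i _ => Finset.sum_congr rfl fun j _ =>
        Finset.sum_congr rfl fun k _ => by ring
    rw [h, h𝒱]; ring
  -- column contraction: ∑ i ∑ k κ i j k t i t k = 2 τ j
  have hcol : ∀ j, (∑ i, ∑ k, κ i j k * t i * t k) = 2 * τ j := by
    intro j
    rw [hτ j]
    rw [show (2:ℝ) * ((1/2) * ∑ i, ∑ k, κ j i k * t i * t k)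
        = ∑ i, ∑ k, κ j i k * t i * t k by ring]
    exact Finset.sum_congr rfl fun i _ => Finset.sum_congr rfl fun k _ => by rw [hκ1]
  -- Mt = 4𝒱 τ
  have hMt : ∀ j, ∑ i, t i * M i j = 4 * 𝒱 * τ j := by
    intro j
    have e : ∀ i, t i * M i j = 4 * τ j * (τ i * t i) - 4 * 𝒱 * ∑ k, κ i j k * t i * t k := by
      intro i
      rw [hM]
      have h1 : (∑ k, κ i j k * t i * t k) = t i * ∑ k, κ i j k * t k := by
        rw [Finset.mul_sum]; exact Finset.sum_congr rfl fun k _ => by ring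
      rw [h1]; ring
    calc ∑ i, t i * M i j
        = ∑ i, (4 * τ j * (τ i * t i) - 4 * 𝒱 * ∑ k, κ i j k * t i * t k) :=
          Finset.sum_congr rfl fun i _ => e i
      _ = 4 * τ j * (∑ i, τ i * t i) - 4 * 𝒱 * ∑ i, ∑ k, κ i j k * t i * t k := by
          rw [Finset.sum_sub_distrib, Finset.mul_sum, Finset.mul_sum]
      _ = 4 * 𝒱 * τ j := by rw [hτt, hcol j]; ring
  -- tᵀ M Q = 4𝒱 ∑ τ Q
  have htQ : (∑ i, ∑ j, t i * M i j * Q j) = 4 * 𝒱 * ∑ j, τ j * Q j := by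
    rw [Finset.sum_comm]
    calc ∑ j, ∑ i, t i * M i j * Q j
        = ∑ j, (∑ i, t i * M i j) * Q j := by
          exact Finset.sum_congr rfl fun j _ => by rw [Finset.sum_mul]
      _ = ∑ j, (4 * 𝒱 * τ j) * Q j := Finset.sum_congr rfl fun j _ => by rw [hMt j]
      _ = 4 * 𝒱 * ∑ j, τ j * Q j := by
          rw [Finset.mul_sum]
          exact Finset.sum_congr rfl fun j _ => by ring
  -- tᵀ M t = 12 𝒱²
  have htt : (∑ i, ∑ j, t i * M i j * t j) = 12 * 𝒱 ^ 2 := by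
    have h : (∑ i, ∑ j, t i * M i j * t j) = 4 * 𝒱 * ∑ j, τ j * t j := by
      rw [Finset.sum_comm]
      calc ∑ j, ∑ i, t i * M i j * t j
          = ∑ j, (∑ i, t i * M i j) * t j := by
            exact Finset.sum_congr rfl fun j _ => by rw [Finset.sum_mul]
        _ = ∑ j, (4 * 𝒱 * τ j) * t j := Finset.sum_congr rfl fun j _ => by rw [hMt j]
        _ = 4 * 𝒱 * ∑ j, τ j * t j := by
            rw [Finset.mul_sum]
            exact Finset.sum_congr rfl fun j _ => by ring
    rw [h, hτt]; ring
  -- symmetry of M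
  have hMs : ∀ i j, M i j = M j i := by
    intro i j
    rw [hM, hM]
    have : (∑ k, κ i j k * t k) = ∑ k, κ j i k * t k :=
      Finset.sum_congr rfl fun k _ => by rw [hκ1]
    rw [this]; ring
  -- Qᵀ M t = 4𝒱 ∑ τ Q
  have hQt : (∑ i, ∑ j, Q i * M i j * t j) = 4 * 𝒱 * ∑ j, τ j * Q j := by
    have h : (∑ i, ∑ j, Q i * M i j * t j) = ∑ i, ∑ j, t j * M j i * Q i := by
      refine Finset.sum_congr rfl fun i _ => Finset.sum_congr rfl fun j _ => ?_
      rw [hMs i j]; ring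
    rw [h, Finset.sum_comm]
    exact htQ
  set T := ∑ i, τ i * Q i with hT
  set QQ := ∑ i, ∑ j, Q i * M i j * Q j with hQQ
  have hQQ0 : 0 ≤ QQ := hpsd Q
  -- quadratic nonnegativity
  have hquad : ∀ x : ℝ, 0 ≤ QQ * (x * x) + (8 * 𝒱 * T) * x + 12 * 𝒱 ^ 2 := by
    intro x
    have hexp : ∑ i, ∑ j, (t i + x * Q i) * M i j * (t j + x * Q j)
        = (∑ i, ∑ j, t i * M i j * t j) + x * (∑ i, ∑ j, t i * M i j * Q j)
          + x * (∑ i, ∑ j, Q i * M i j * t j) + x ^ 2 * QQ := by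
      rw [hQQ]
      simp only [Finset.mul_sum, ← Finset.sum_add_distrib]
      exact Finset.sum_congr rfl fun i _ => Finset.sum_congr rfl fun j _ => by ring
    have := hpsd (fun i => t i + x * Q i)
    rw [hexp, htt, htQ, hQt] at this
    nlinarith [this]
  have hdisc : discrim QQ (8 * 𝒱 * T) (12 * 𝒱 ^ 2) ≤ 0 := discrim_le_zero hquad
  rw [discrim] at hdisc
  -- T^2 ≤ (3/4) QQ
  have hT2 : T ^ 2 ≤ (3 / 4) * QQ := by nlinarith [hdisc, mul_pos h𝒱pos h𝒱pos, sq_nonneg T]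
  have hs3 : (0:ℝ) ≤ Real.sqrt 3 / 2 := by positivity
  calc T ≤ |T| := le_abs_self T
    _ = Real.sqrt (T ^ 2) := (Real.sqrt_sq_eq_abs T).symm
    _ ≤ Real.sqrt ((3 / 4) * QQ) := Real.sqrt_le_sqrt hT2
    _ = Real.sqrt 3 / 2 * Real.sqrt QQ := by
        rw [show (3:ℝ)/4 = (Real.sqrt 3 / 2) ^ 2 by
          rw [div_pow, Real.sq_sqrt (by norm_num : (0:ℝ) ≤ 3)]; norm_num,
          Real.sqrt_mul (by positivity), Real.sqrt_sq hs3]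
end

section
/- Fix reals σ > 0 and δ > 0 and define the linear functional vol : ℤ⁴ → ℝ by vol(p,q,r,s) := p·τ₁ + q·τ₂ + r·τ₃ + (s+4r)·τ₄ with τ₁ = τ₂ = 6δ² + 5σδ, τ₃ = 4σδ, τ₄ = σ² + 4σδ. Let g₁=(1,0,0,0), g₂=(0,1,0,0), g₃=(0,0,1,−4), g₄=(0,0,0,1), g₅=(−2,2,1,0), g₆=(2,2,−1,4), g₇=(2,−2,1,0) in ℤ⁴. Then for every γ : Fin 7 → ℤ with γ A ≥ 0 for all A, setting w := ∑_A γ A · g_A with first two coordinates w₁, w₂: one has w₁ + w₂ ≥ 0 and vol(w) ≥ 6δ²·(w₁ + w₂); moreover if w₁ + w₂ ≠ 0 then vol(w) ≥ 6δ² + 5σδ > 6δ². -/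
open scoped BigOperators

/-- Divisor-volume functional at the Kähler point `t_a = t_b = σ, t_c = t_e = δ`:
`vol(p,q,r,s) = p·τ₁ + q·τ₂ + r·τ₃ + (s+4r)·τ₄` with
`τ₁ = τ₂ = 6δ² + 5σδ`, `τ₃ = 4σδ`, `τ₄ = σ² + 4σδ`. -/
noncomputable def volZ (σ δ : ℝ) (w : Fin 4 → ℤ) : ℝ :=
  (w 0 : ℝ) * (6 * δ ^ 2 + 5 * σ * δ) + (w 1 : ℝ) * (6 * δ ^ 2 + 5 * σ * δ)
    + (w 2 : ℝ) * (4 * σ * δ) + ((w 3 : ℝ) + 4 * (w 2 : ℝ)) * (σ ^ 2 + 4 * σ * δ)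

/-- The seven generators of the cone `𝓔₂^out(X)`. -/
def gensE : Fin 7 → Fin 4 → ℤ :=
  ![![1, 0, 0, 0], ![0, 1, 0, 0], ![0, 0, 1, -4], ![0, 0, 0, 1],
    ![-2, 2, 1, 0], ![2, 2, -1, 4], ![2, -2, 1, 0]]

/-- For every nonnegative integer combination `w = ∑ γ_A g_A` of the generators:
`w₁ + w₂ ≥ 0`, `vol(w) ≥ 6δ²(w₁+w₂)`, and if `w₁ + w₂ ≠ 0` then
`vol(w) ≥ 6δ² + 5σδ > 6δ²`. -/
theorem cone_volume_lower_bound (σ δ : ℝ) (hσ : 0 < σ) (hδ : 0 < δ)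
    (γ : Fin 7 → ℤ) (hγ : ∀ A, 0 ≤ γ A) :
    0 ≤ (∑ A, γ A • gensE A) 0 + (∑ A, γ A • gensE A) 1 ∧
    volZ σ δ (∑ A, γ A • gensE A) ≥
      6 * δ ^ 2 * (((∑ A, γ A • gensE A) 0 + (∑ A, γ A • gensE A) 1 : ℤ) : ℝ) ∧
    ((∑ A, γ A • gensE A) 0 + (∑ A, γ A • gensE A) 1 ≠ 0 →
      volZ σ δ (∑ A, γ A • gensE A) ≥ 6 * δ ^ 2 + 5 * σ * δ ∧
        6 * δ ^ 2 + 5 * σ * δ > 6 * δ ^ 2) := by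
  have h0 := hγ 0; have h1 := hγ 1; have h2 := hγ 2; have h3 := hγ 3
  have h4 := hγ 4; have h5 := hγ 5; have h6 := hγ 6
  have G0 : gensE 0 = ![1, 0, 0, 0] := rfl
  have G1 : gensE 1 = ![0, 1, 0, 0] := rfl
  have G2 : gensE 2 = ![0, 0, 1, -4] := rfl
  have G3 : gensE 3 = ![0, 0, 0, 1] := rfl
  have G4 : gensE 4 = ![-2, 2, 1, 0] := rfl
  have G5 : gensE 5 = ![2, 2, -1, 4] := rfl
  have G6 : gensE 6 = ![2, -2, 1, 0] := rfl
  simp only [Fin.sum_univ_seven, G0, G1, G2, G3, G4, G5, G6, volZ, Pi.add_apply, Pi.smul_apply,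
    Matrix.cons_val_zero, Matrix.cons_val_one, Matrix.head_cons, Matrix.cons_val_two,
    Matrix.tail_cons, Matrix.cons_val_three, Matrix.cons_val_fin_one, Matrix.cons_val',
    Matrix.cons_val_succ, smul_eq_mul]
  push_cast
  have hr0 : (0:ℝ) ≤ γ 0 := by exact_mod_cast h0
  have hr1 : (0:ℝ) ≤ γ 1 := by exact_mod_cast h1
  have hr2 : (0:ℝ) ≤ γ 2 := by exact_mod_cast h2
  have hr3 : (0:ℝ) ≤ γ 3 := by exact_mod_cast h3
  have hr4 : (0:ℝ) ≤ γ 4 := by exact_mod_cast h4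
  have hr5 : (0:ℝ) ≤ γ 5 := by exact_mod_cast h5
  have hr6 : (0:ℝ) ≤ γ 6 := by exact_mod_cast h6
  refine ⟨?_, ?_, ?_⟩
  · linarith
  · nlinarith [mul_pos hσ hδ, mul_pos (mul_pos hσ hδ) hδ,
      mul_nonneg (mul_nonneg hσ.le hδ.le) hr0, mul_nonneg (mul_nonneg hσ.le hδ.le) hr1,
      mul_nonneg (mul_nonneg hσ.le hδ.le) hr2, mul_nonneg (mul_nonneg hσ.le hδ.le) hr3,
      mul_nonneg (mul_nonneg hσ.le hδ.le) hr4, mul_nonneg (mul_nonneg hσ.le hδ.le) hr5,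
      mul_nonneg (mul_nonneg hσ.le hδ.le) hr6,
      mul_nonneg (mul_nonneg hσ.le hσ.le) hr3, mul_nonneg (mul_nonneg hσ.le hσ.le) hr4,
      mul_nonneg (mul_nonneg hσ.le hσ.le) hr6]
  intro hne
  have hkey : (1:ℤ) ≤ γ 0 + γ 1 + γ 5 := by omega
  have hkeyR : (1:ℝ) ≤ γ 0 + γ 1 + γ 5 := by exact_mod_cast hkey
  have hS : (1:ℤ) ≤ γ 0 + γ 1 + 4 * γ 5 := by omega
  have hSR : (1:ℝ) ≤ γ 0 + γ 1 + 4 * γ 5 := by exact_mod_cast hS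
  constructor
  · nlinarith [mul_pos hσ hδ, sq_nonneg δ, mul_pos hδ hδ,
      mul_nonneg (mul_nonneg hσ.le hδ.le) hr2, mul_nonneg (mul_nonneg hσ.le hδ.le) hr4,
      mul_nonneg (mul_nonneg hσ.le hδ.le) hr6,
      mul_nonneg (mul_nonneg hσ.le hσ.le) hr3, mul_nonneg (mul_nonneg hσ.le hσ.le) hr4,
      mul_nonneg (mul_nonneg hσ.le hσ.le) hr6]
  · nlinarith [mul_pos hσ hδ]
end

section
/- Fix reals σ > 0 and δ > 0 and define the linear functional vol : ℤ⁴ → ℝ by vol(p,q,r,s) := p·τ₁ + q·τ₂ + r·τ₃ + (s+4r)·τ₄ with τ₁ = τ₂ = 6δ² + 5σδ, τ₃ = 4σδ, τ₄ = σ² + 4σδ. Let g₁=(1,0,0,0), g₂=(0,1,0,0), g₃=(0,0,1,−4), g₄=(0,0,0,1), g₅=(−2,2,1,0), g₆=(2,2,−1,4), g₇=(2,−2,1,0) in ℤ⁴, let C ⊂ ℤ⁴ be the set of sums ∑_A γ A·g_A over γ : Fin 7 → ℤ with all γ A ≥ 0, and call w ∈ C admissible if it is NOT the case that (w₁ = −w₂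 and w₁ ≠ 0), where w₁, w₂ are its first two coordinates. Then for every integer k ≥ 1 and all c, d ∈ ℤ: if (k, −k, c, d) = ∑_{i=1}^m v_i − ∑_{j=1}^n w_j for admissible elements v₁,…,v_m, w₁,…,w_n of C, then ∑_{i=1}^m vol(v_i) + ∑_{j=1}^n vol(w_j) > 12δ². -/
open scoped BigOperators

/-- The cone `C ⊂ ℤ⁴` of nonnegative integer combinations of the generators. -/
def coneC : Set (Fin 4 → ℤ) :=
  {w | ∃ γ : Fin 7 → ℤ, (∀ A, 0 ≤ γ A) ∧ w = ∑ A, γ A • gensE A}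

/-- `w` is admissible if it is not of the form `(a, −a, ·, ·)` with `a ≠ 0`. -/
def Admissible (w : Fin 4 → ℤ) : Prop := ¬ (w 0 = -w 1 ∧ w 0 ≠ 0)

/-! ### Auxiliary lemmas -/

lemma cv5' {α : Type*} (x0 x1 x2 x3 x4 x5 x6 : α) :
    (![x0,x1,x2,x3,x4,x5,x6] : Fin 7 → α) 5 = x5 := rfl
lemma cv6' {α : Type*} (x0 x1 x2 x3 x4 x5 x6 : α) :
    (![x0,x1,x2,x3,x4,x5,x6] : Fin 7 → α) 6 = x6 := rfl

lemma cone_coord (γ : Fin 7 → ℤ) (i : Fin 4) :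
    (∑ A, γ A • gensE A) i = ∑ A, γ A * gensE A i := by
  simp [Finset.sum_apply]

/-- The functional `ψ(u) = u₀ + u₁` is nonnegative on the cone. -/
lemma psi_nonneg {u : Fin 4 → ℤ} (hu : u ∈ coneC) : 0 ≤ u 0 + u 1 := by
  obtain ⟨γ, hγ, rfl⟩ := hu
  rw [cone_coord, cone_coord]
  have h0 := hγ 0; have h1 := hγ 1; have h5 := hγ 5
  simp only [Fin.sum_univ_seven, gensE, Matrix.cons_val_zero, Matrix.cons_val_one,
    Matrix.head_cons, Matrix.cons_val_two, Matrix.tail_cons, Matrix.cons_val_three,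
    Matrix.cons_val_four, cv5', cv6']
  omega

/-- On the cone, the volume dominates `ψ(u)·(6δ² + 4σδ)`. -/
lemma vol_lb (σ δ : ℝ) (hσ : 0 < σ) (hδ : 0 < δ) {u : Fin 4 → ℤ} (hu : u ∈ coneC) :
    ((u 0 + u 1 : ℤ) : ℝ) * (6 * δ ^ 2 + 4 * σ * δ) ≤ volZ σ δ u := by
  obtain ⟨γ, hγ, rfl⟩ := hu
  unfold volZ
  rw [cone_coord, cone_coord, cone_coord, cone_coord]
  simp only [Fin.sum_univ_seven, gensE, Matrix.cons_val_zero, Matrix.cons_val_one,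
    Matrix.head_cons, Matrix.cons_val_two, Matrix.tail_cons, Matrix.cons_val_three,
    Matrix.cons_val_four, cv5', cv6']
  push_cast
  have c0 : (0:ℝ) ≤ γ 0 := by exact_mod_cast hγ 0
  have c1 : (0:ℝ) ≤ γ 1 := by exact_mod_cast hγ 1
  have c2 : (0:ℝ) ≤ γ 2 := by exact_mod_cast hγ 2
  have c3 : (0:ℝ) ≤ γ 3 := by exact_mod_cast hγ 3
  have c4 : (0:ℝ) ≤ γ 4 := by exact_mod_cast hγ 4
  have c5 : (0:ℝ) ≤ γ 5 := by exact_mod_cast hγ 5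
  have c6 : (0:ℝ) ≤ γ 6 := by exact_mod_cast hγ 6
  have hσδ : (0:ℝ) < σ * δ := mul_pos hσ hδ
  nlinarith [mul_nonneg c0 hσδ.le, mul_nonneg c1 hσδ.le, mul_nonneg c2 hσδ.le,
    mul_nonneg c3 hσδ.le, mul_nonneg c4 hσδ.le, mul_nonneg c6 hσδ.le,
    mul_nonneg c3 (sq_nonneg σ), mul_nonneg c4 (sq_nonneg σ), mul_nonneg c6 (sq_nonneg σ)]

/-- An admissible class with `u₀ + u₁ = 0` has `u₀ = 0`. -/
lemma adm_zero {u : Fin 4 → ℤ} (ha : Admissible u) (h : u 0 + u 1 = 0) : u 0 = 0 := by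
  by_contra h0
  exact ha ⟨by omega, h0⟩

/-- Every piecewise-calibrated representative of `Σ^{(k)} = (k, −k, c, d)`, i.e. every
decomposition into admissible effective pieces `v_i ∈ C` and anti-effective pieces
`−w_j` with `w_j ∈ C` admissible, has total volume exceeding `12δ²`. -/
theorem piecewise_calibrated_volume_bound (σ δ : ℝ) (hσ : 0 < σ) (hδ : 0 < δ)
    (k : ℤ) (hk : 1 ≤ k) (c d : ℤ) (m n : ℕ)
    (v : Fin m → Fin 4 → ℤ) (w : Fin n → Fin 4 → ℤ)
    (hv : ∀ i, v i ∈ coneC ∧ Admissible (v i))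
    (hw : ∀ j, w j ∈ coneC ∧ Admissible (w j))
    (hsum : (![k, -k, c, d] : Fin 4 → ℤ) = ∑ i, v i - ∑ j, w j) :
    ∑ i, volZ σ δ (v i) + ∑ j, volZ σ δ (w j) > 12 * δ ^ 2 := by
  -- coordinate equations
  have h0 := congrFun hsum 0
  have h1 := congrFun hsum 1
  simp only [Matrix.cons_val_zero, Matrix.cons_val_one, Matrix.head_cons,
    Pi.sub_apply, Finset.sum_apply] at h0 h1
  -- ψ sums
  set S1 : ℤ := ∑ i, (v i 0 + v i 1) with hS1
  set S2 : ℤ := ∑ j, (w j 0 + w j 1) with hS2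
  have hS12 : S1 = S2 := by
    rw [hS1, hS2, Finset.sum_add_distrib, Finset.sum_add_distrib]
    omega
  have hvz : ∀ i, 0 ≤ v i 0 + v i 1 := fun i => psi_nonneg (hv i).1
  have hwz : ∀ j, 0 ≤ w j 0 + w j 1 := fun j => psi_nonneg (hw j).1
  have hS1nn : 0 ≤ S1 := Finset.sum_nonneg fun i _ => hvz i
  have hS1pos : 1 ≤ S1 := by
    rcases lt_or_eq_of_le hS1nn with h | h
    · omega
    · exfalso
      have hv0 : ∀ i ∈ Finset.univ, v i 0 + v i 1 = 0 := by
        intro i _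
        have := (Finset.sum_eq_zero_iff_of_nonneg (fun i _ => hvz i)).1 h.symm i (Finset.mem_univ i)
        omega
      have hw0 : ∀ j ∈ Finset.univ, w j 0 + w j 1 = 0 := by
        intro j _
        have h2 : S2 = 0 := by omega
        have := (Finset.sum_eq_zero_iff_of_nonneg (fun j _ => hwz j)).1 h2 j (Finset.mem_univ j)
        omega
      have hvs : ∑ i, v i 0 = 0 :=
        Finset.sum_eq_zero fun i hi => adm_zero (hv i).2 (hv0 i hi)
      have hws : ∑ j, w j 0 = 0 :=
        Finset.sum_eq_zero fun j hj => adm_zero (hw j).2 (hw0 j hj)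
      omega
  -- volume lower bounds
  have hb : (6 * δ ^ 2 + 4 * σ * δ) > 0 := by positivity
  have hV : ((S1 : ℝ)) * (6 * δ ^ 2 + 4 * σ * δ) ≤ ∑ i, volZ σ δ (v i) := by
    have : ∑ i, ((v i 0 + v i 1 : ℤ) : ℝ) * (6 * δ ^ 2 + 4 * σ * δ) ≤ ∑ i, volZ σ δ (v i) :=
      Finset.sum_le_sum fun i _ => vol_lb σ δ hσ hδ (hv i).1
    calc ((S1 : ℝ)) * (6 * δ ^ 2 + 4 * σ * δ)
        = ∑ i, ((v i 0 + v i 1 : ℤ) : ℝ) * (6 * δ ^ 2 + 4 * σ * δ) := by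
          rw [← Finset.sum_mul, hS1]; push_cast; ring
      _ ≤ _ := this
  have hW : ((S2 : ℝ)) * (6 * δ ^ 2 + 4 * σ * δ) ≤ ∑ j, volZ σ δ (w j) := by
    have : ∑ j, ((w j 0 + w j 1 : ℤ) : ℝ) * (6 * δ ^ 2 + 4 * σ * δ) ≤ ∑ j, volZ σ δ (w j) :=
      Finset.sum_le_sum fun j _ => vol_lb σ δ hσ hδ (hw j).1
    calc ((S2 : ℝ)) * (6 * δ ^ 2 + 4 * σ * δ)
        = ∑ j, ((w j 0 + w j 1 : ℤ) : ℝ) * (6 * δ ^ 2 + 4 * σ * δ) := by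
          rw [← Finset.sum_mul, hS2]; push_cast; ring
      _ ≤ _ := this
  have hS1R : (1:ℝ) ≤ (S1 : ℝ) := by exact_mod_cast hS1pos
  have hS2R : (1:ℝ) ≤ (S2 : ℝ) := by rw [← hS12]; exact hS1R
  nlinarith [mul_pos hσ hδ]
end

section
/- Fix an integer a ≥ 2 and define S := {(i,k) ∈ ℤ × ℤ : 1 ≤ i ≤ a+1 and 0 ≤ k ≤ a−2} and T := {(i,k) ∈ ℤ × ℤ : 1 ≤ i ≤ a−1 and 0 ≤ k ≤ a}. For coefficients c : Fin 3 × Fin 3 → ℂ let Ψ_c : (S → ℂ) → (T → ℂ) be the ℂ-linear map defined on basis vectors by e_{(i,k)} ↦ ∑_{p=0}^{2} ∑_{q=0}^{2} c(p,q)·e_{(i−p, k+q)}, where any term whose index lies outside T is omitted. Then there exists a nonzero polynomial P in the nine variables c(p,q) (i.e. a nonzero element of MvPolynomial (Fin 3 × Fin 3) ℂ) such that whenever P(c) ≠ 0, the map Ψ_c is bijective. -/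
/-- Index set of the monomial basis `ℬ_{a+2,a−2}` of `H¹(𝒪_V(−a−2, a−2, *))`. -/
def srcIdx (a : ℤ) : Set (ℤ × ℤ) :=
  {p | 1 ≤ p.1 ∧ p.1 ≤ a + 1 ∧ 0 ≤ p.2 ∧ p.2 ≤ a - 2}

/-- Index set of the monomial basis `ℬ_{a,a}` of `H¹(𝒪_V(−a, a, *))`. -/
def tgtIdx (a : ℤ) : Set (ℤ × ℤ) :=
  {p | 1 ≤ p.1 ∧ p.1 ≤ a - 1 ∧ 0 ≤ p.2 ∧ p.2 ≤ a}

/-- Extension by zero of a function defined on a subset of `ℤ × ℤ`. -/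
noncomputable def zext (U : Set (ℤ × ℤ)) (f : U → ℂ) (p : ℤ × ℤ) : ℂ :=
  open scoped Classical in
  if h : p ∈ U then f ⟨p, h⟩ else 0

/-- The multiplication map `Ψ_c` by the general bidegree-(2,2) form
`F = ∑_{p,q} c(p,q) x₁^p x₂^{2−p} x₃^q x₄^{2−q}` in the monomial bases:
`(Ψ f)(i,k) = ∑_{p,q} c(p,q)·f(i+p, k−q)`, extending `f` by zero outside the source. -/
noncomputable def PsiMap (a : ℤ) (c : Fin 3 × Fin 3 → ℂ) (f : srcIdx a → ℂ)
    (q : tgtIdx a) : ℂ :=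
  ∑ p : Fin 3, ∑ r : Fin 3,
    c (p, r) * zext (srcIdx a) f (q.1.1 + ((p : ℕ) : ℤ), q.1.2 - ((r : ℕ) : ℤ))

/-! ### Auxiliary material -/

lemma srcIdx_finite (a : ℤ) : (srcIdx a).Finite := by
  apply Set.Finite.subset ((Set.finite_Icc (1:ℤ) (a+1)).prod (Set.finite_Icc (0:ℤ) (a-2)))
  rintro ⟨i, k⟩ ⟨h1, h2, h3, h4⟩
  exact ⟨⟨h1, h2⟩, ⟨h3, h4⟩⟩

lemma tgtIdx_finite (a : ℤ) : (tgtIdx a).Finite := by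
  apply Set.Finite.subset ((Set.finite_Icc (1:ℤ) (a-1)).prod (Set.finite_Icc (0:ℤ) a))
  rintro ⟨i, k⟩ ⟨h1, h2, h3, h4⟩
  exact ⟨⟨h1, h2⟩, ⟨h3, h4⟩⟩

noncomputable instance (a : ℤ) : Fintype ↥(srcIdx a) := (srcIdx_finite a).fintype
noncomputable instance (a : ℤ) : Fintype ↥(tgtIdx a) := (tgtIdx_finite a).fintype

/-- The per-diagonal matching from the target index set to the source index set. -/
def sigmaFun (a : ℤ) (t : ℤ × ℤ) : ℤ × ℤ :=
  if t.1 + t.2 ≤ a - 1 then t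
  else if t.1 + t.2 = a then (t.1 + 1, t.2 - 1)
  else (t.1 + 2, t.2 - 2)

/-- Inverse of `sigmaFun`. -/
def tauFun (a : ℤ) (s : ℤ × ℤ) : ℤ × ℤ :=
  if s.1 + s.2 ≤ a - 1 then s
  else if s.1 + s.2 = a then (s.1 - 1, s.2 + 1)
  else (s.1 - 2, s.2 + 2)

lemma sigma_mem {a : ℤ} {t : ℤ × ℤ} (h : t ∈ tgtIdx a) :
    sigmaFun a t ∈ srcIdx a := by
  obtain ⟨i, k⟩ := t
  obtain ⟨h1, h2, h3, h4⟩ := h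
  simp only [sigmaFun, srcIdx, Set.mem_setOf_eq]
  split_ifs <;> simp_all <;> omega

lemma tau_mem {a : ℤ} {s : ℤ × ℤ} (h : s ∈ srcIdx a) :
    tauFun a s ∈ tgtIdx a := by
  obtain ⟨i, k⟩ := s
  obtain ⟨h1, h2, h3, h4⟩ := h
  simp only [tauFun, tgtIdx, Set.mem_setOf_eq]
  split_ifs <;> simp_all <;> omega

lemma tau_sigma {a : ℤ} {t : ℤ × ℤ} : tauFun a (sigmaFun a t) = t := by
  obtain ⟨i, k⟩ := t
  simp only [sigmaFun, tauFun]
  split_ifs <;> simp_all [Prod.ext_iff] <;> omega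

lemma sigma_tau {a : ℤ} {s : ℤ × ℤ} : sigmaFun a (tauFun a s) = s := by
  obtain ⟨i, k⟩ := s
  simp only [sigmaFun, tauFun]
  split_ifs <;> simp_all [Prod.ext_iff] <;> omega

/-- The equivalence between the target and source index sets. -/
noncomputable def eTS (a : ℤ) (ha : 2 ≤ a) : ↥(tgtIdx a) ≃ ↥(srcIdx a) where
  toFun t := ⟨sigmaFun a t.1, sigma_mem t.2⟩
  invFun s := ⟨tauFun a s.1, tau_mem s.2⟩
  left_inv _ := Subtype.ext tau_sigma
  right_inv _ := Subtype.ext sigma_tau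

lemma zext_eq_sum (U : Set (ℤ × ℤ)) [Fintype U] (f : U → ℂ) (pt : ℤ × ℤ) :
    (∑ s : U, if (s : ℤ × ℤ) = pt then f s else 0) = zext U f pt := by
  classical
  by_cases h : pt ∈ U
  · rw [zext, dif_pos h]
    rw [Finset.sum_eq_single (⟨pt, h⟩ : U)]
    · simp
    · intro b _ hb
      rw [if_neg]; intro hbp; exact hb (Subtype.ext hbp)
    · intro hn; exact absurd (Finset.mem_univ _) hn
  · rw [zext, dif_neg h]
    apply Finset.sum_eq_zero
    intro s _
    rw [if_neg]; intro hs; exact h (hs ▸ s.2)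

/-- The matrix of `Ψ` with polynomial entries, made square via `eTS`. -/
noncomputable def Bmat (a : ℤ) (ha : 2 ≤ a) :
    Matrix ↥(tgtIdx a) ↥(tgtIdx a) (MvPolynomial (Fin 3 × Fin 3) ℂ) := fun t u =>
  ∑ p : Fin 3, ∑ r : Fin 3, MvPolynomial.X (p, r) *
    (if ((eTS a ha u : ℤ × ℤ)) = (t.1.1 + ((p : ℕ) : ℤ), t.1.2 - ((r : ℕ) : ℤ)) then 1 else 0)

lemma psi_eq_mulVec (a : ℤ) (ha : 2 ≤ a) (c : Fin 3 × Fin 3 → ℂ) (f : srcIdx a → ℂ)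
    (t : ↥(tgtIdx a)) :
    PsiMap a c f t =
      ((Bmat a ha).map (MvPolynomial.eval c)).mulVec (fun u => f (eTS a ha u)) t := by
  classical
  rw [Matrix.mulVec]
  have hentry : ∀ u, ((Bmat a ha).map (MvPolynomial.eval c)) t u =
      ∑ p : Fin 3, ∑ r : Fin 3, c (p, r) *
        (if ((eTS a ha u : ℤ × ℤ)) = (t.1.1 + ((p : ℕ) : ℤ), t.1.2 - ((r : ℕ) : ℤ))
          then 1 else 0) := by
    intro u
    simp [Bmat, Matrix.map_apply, apply_ite (MvPolynomial.eval c)]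
  simp only [dotProduct, hentry, Finset.sum_mul, PsiMap]
  symm
  rw [Finset.sum_comm]
  apply Finset.sum_congr rfl
  intro p _
  rw [Finset.sum_comm]
  apply Finset.sum_congr rfl
  intro r _
  rw [mul_comm (c (p, r))]
  rw [← zext_eq_sum (srcIdx a) f (t.1.1 + ((p : ℕ) : ℤ), t.1.2 - ((r : ℕ) : ℤ))]
  rw [← Equiv.sum_comp (eTS a ha) (fun s : ↥(srcIdx a) =>
    (if (s : ℤ × ℤ) = (t.1.1 + ((p : ℕ) : ℤ), t.1.2 - ((r : ℕ) : ℤ)) then f s else 0))]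
  rw [Finset.sum_mul]
  apply Finset.sum_congr rfl
  intro u _
  by_cases h : ((eTS a ha u : ℤ × ℤ)) = (t.1.1 + ((p : ℕ) : ℤ), t.1.2 - ((r : ℕ) : ℤ))
  · simp [h, mul_comm]
  · simp [h]

/-- The special coefficient choice `c₀(p,q) = δ_{pq}·(3 if p = 1 else 1)`. -/
def cSpec : Fin 3 × Fin 3 → ℂ := fun pr => if pr.1 = pr.2 then (if pr.1 = 1 then 3 else 1) else 0

lemma psi_cSpec_apply (a : ℤ) (f : srcIdx a → ℂ) (t : ↥(tgtIdx a)) :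
    PsiMap a cSpec f t = zext (srcIdx a) f (t.1.1, t.1.2)
      + 3 * zext (srcIdx a) f (t.1.1 + 1, t.1.2 - 1)
      + zext (srcIdx a) f (t.1.1 + 2, t.1.2 - 2) := by
  rw [PsiMap]
  rw [Fin.sum_univ_three]
  rw [Fin.sum_univ_three, Fin.sum_univ_three, Fin.sum_univ_three]
  simp (config := { decide := true }) only [cSpec]
  norm_num

/-- Scaling weights for the diagonal-dominance argument. -/
noncomputable def vwt (a : ℤ) (s : ℤ × ℤ) : ℝ :=
  if s.1 + s.2 ≤ a - 1 then (4:ℝ) ^ (-s.1) else if s.1 + s.2 = a then 1 else (4:ℝ) ^ s.1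

lemma vwt_pos (a : ℤ) (s : ℤ × ℤ) : 0 < vwt a s := by
  rw [vwt]; split_ifs <;> positivity

lemma norm_three_mul (z : ℂ) : ‖(3:ℂ) * z‖ = 3 * ‖z‖ := by
  rw [norm_mul]; norm_num

lemma psi_cSpec_ker (a : ℤ) (ha : 2 ≤ a) (f : srcIdx a → ℂ)
    (hf : ∀ t, PsiMap a cSpec f t = 0) : f = 0 := by
  by_contra hne
  obtain ⟨s₀, hs₀⟩ : ∃ s, f s ≠ 0 := Function.ne_iff.mp hne
  obtain ⟨sm, -, hmax⟩ := Finset.exists_max_image (Finset.univ : Finset ↥(srcIdx a))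
    (fun s => ‖f s‖ / vwt a s.1) ⟨s₀, Finset.mem_univ _⟩
  obtain ⟨⟨j, k⟩, hmem⟩ := sm
  set fm := f ⟨(j, k), hmem⟩ with hfm
  have hpos : 0 < ‖fm‖ := by
    by_contra hcon
    have h0 : ‖fm‖ = 0 := le_antisymm (not_lt.mp hcon) (norm_nonneg _)
    have h1 : 0 < ‖f s₀‖ / vwt a s₀.1 := div_pos (norm_pos_iff.mpr hs₀) (vwt_pos a _)
    have h2 := hmax s₀ (Finset.mem_univ _)
    simp only [← hfm, h0, zero_div] at h2
    linarith
  have key : ∀ p : ℤ × ℤ, ‖zext (srcIdx a) f p‖ * vwt a (j, k) ≤ ‖fm‖ * vwt a p := by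
    intro p
    by_cases h : p ∈ srcIdx a
    · rw [zext, dif_pos h]
      have := hmax ⟨p, h⟩ (Finset.mem_univ _)
      simp only [← hfm] at this
      rw [div_le_div_iff₀ (vwt_pos a p) (vwt_pos a (j, k))] at this
      linarith
    · rw [zext, dif_neg h]
      simp only [norm_zero, zero_mul]
      exact mul_nonneg (norm_nonneg _) (vwt_pos a p).le
  have hm : 1 ≤ j ∧ j ≤ a + 1 ∧ 0 ≤ k ∧ k ≤ a - 2 := hmem
  by_cases hd1 : j + k ≤ a - 1
  · -- low diagonal: dominant offset 0
    have ht : ((j, k) : ℤ × ℤ) ∈ tgtIdx a := by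
      refine ⟨hm.1, by omega, hm.2.2.1, by omega⟩
    have heq := hf ⟨(j, k), ht⟩
    rw [psi_cSpec_apply] at heq
    simp only at heq
    have hz : zext (srcIdx a) f (j, k) = fm := by rw [zext, dif_pos hmem]
    rw [hz] at heq
    have hb : ‖fm‖ ≤ 3 * ‖zext (srcIdx a) f (j + 1, k - 1)‖
        + ‖zext (srcIdx a) f (j + 2, k - 2)‖ := by
      have h3 : fm = -(3 * zext (srcIdx a) f (j + 1, k - 1)
          + zext (srcIdx a) f (j + 2, k - 2)) := by linear_combination heq
      rw [h3, norm_neg]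
      calc ‖3 * zext (srcIdx a) f (j + 1, k - 1) + zext (srcIdx a) f (j + 2, k - 2)‖
          ≤ ‖3 * zext (srcIdx a) f (j + 1, k - 1)‖ + ‖zext (srcIdx a) f (j + 2, k - 2)‖ :=
            norm_add_le _ _
        _ = _ := by rw [norm_three_mul]
    have k1 := key (j + 1, k - 1)
    have k2 := key (j + 2, k - 2)
    have hv0 : vwt a (j, k) = (4:ℝ) ^ (-j) := by rw [vwt]; rw [if_pos (by simpa using hd1)]
    have hv1 : vwt a (j + 1, k - 1) = (4:ℝ) ^ (-(j+1)) := by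
      rw [vwt]; rw [if_pos (by simp; omega)]
    have hv2 : vwt a (j + 2, k - 2) = (4:ℝ) ^ (-(j+2)) := by
      rw [vwt]; rw [if_pos (by simp; omega)]
    rw [hv0, hv1] at k1
    rw [hv0, hv2] at k2
    have hfin : ‖fm‖ * (4:ℝ) ^ (-j) ≤ ‖fm‖ * (3 * (4:ℝ) ^ (-(j+1)) + (4:ℝ) ^ (-(j+2))) := by
      have := mul_le_mul_of_nonneg_right hb (le_of_lt (by positivity : (0:ℝ) < (4:ℝ) ^ (-j)))
      nlinarith [norm_nonneg (zext (srcIdx a) f (j + 1, k - 1)),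
        norm_nonneg (zext (srcIdx a) f (j + 2, k - 2))]
    have hq : (4:ℝ) ^ (-j) ≤ 3 * (4:ℝ) ^ (-(j+1)) + (4:ℝ) ^ (-(j+2)) :=
      le_of_mul_le_mul_left (by linarith [hfin]) hpos
    have e1 : (4:ℝ) ^ (-(j+1)) = (4:ℝ) ^ (-j) * (4:ℝ) ^ (-1:ℤ) := by
      rw [← zpow_add₀ (by norm_num : (4:ℝ) ≠ 0)]; ring_nf
    have e2 : (4:ℝ) ^ (-(j+2)) = (4:ℝ) ^ (-j) * (4:ℝ) ^ (-2:ℤ) := by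
      rw [← zpow_add₀ (by norm_num : (4:ℝ) ≠ 0)]; ring_nf
    rw [e1, e2] at hq
    have hA : (0:ℝ) < (4:ℝ) ^ (-j) := by positivity
    have c1 : ((4:ℝ) ^ (-1:ℤ)) = 1/4 := by norm_num
    have c2 : ((4:ℝ) ^ (-2:ℤ)) = 1/16 := by norm_num
    rw [c1, c2] at hq
    linarith
  · by_cases hd2 : j + k = a
    · -- middle diagonal: dominant offset 1, row (j-1, k+1)
      have ht : ((j - 1, k + 1) : ℤ × ℤ) ∈ tgtIdx a := by
        refine ⟨by omega, by omega, by omega, by omega⟩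
      have heq := hf ⟨(j - 1, k + 1), ht⟩
      rw [psi_cSpec_apply] at heq
      simp only at heq
      have hz : zext (srcIdx a) f (j - 1 + 1, k + 1 - 1) = fm := by
        have : ((j - 1 + 1, k + 1 - 1) : ℤ × ℤ) = (j, k) := by norm_num
        rw [this, zext, dif_pos hmem]
      rw [hz] at heq
      have hb : 3 * ‖fm‖ ≤ ‖zext (srcIdx a) f (j - 1, k + 1)‖
          + ‖zext (srcIdx a) f (j - 1 + 2, k + 1 - 2)‖ := by
        have h3 : 3 * fm = -(zext (srcIdx a) f (j - 1, k + 1)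
            + zext (srcIdx a) f (j - 1 + 2, k + 1 - 2)) := by linear_combination heq
        have hn : ‖(3:ℂ) * fm‖ = 3 * ‖fm‖ := norm_three_mul fm
        rw [← hn, h3, norm_neg]
        exact norm_add_le _ _
      have k1 := key (j - 1, k + 1)
      have k2 := key (j - 1 + 2, k + 1 - 2)
      have hv0 : vwt a (j, k) = 1 := by
        rw [vwt]; rw [if_neg (by simpa using hd1), if_pos (by simpa using hd2)]
      have hv1 : vwt a (j - 1, k + 1) = 1 := by
        rw [vwt]; rw [if_neg (by simp; omega), if_pos (by simp; omega)]
      have hv2 : vwt a (j - 1 + 2, k + 1 - 2) = 1 := by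
        rw [vwt]; rw [if_neg (by simp; omega), if_pos (by simp; omega)]
      rw [hv0, hv1, mul_one, mul_one] at k1
      rw [hv0, hv2, mul_one, mul_one] at k2
      linarith
    · -- high diagonal: dominant offset 2, row (j-2, k+2)
      have ht : ((j - 2, k + 2) : ℤ × ℤ) ∈ tgtIdx a := by
        refine ⟨by omega, by omega, by omega, by omega⟩
      have heq := hf ⟨(j - 2, k + 2), ht⟩
      rw [psi_cSpec_apply] at heq
      simp only at heq
      have hz : zext (srcIdx a) f (j - 2 + 2, k + 2 - 2) = fm := by
        have : ((j - 2 + 2, k + 2 - 2) : ℤ × ℤ) = (j, k) := by norm_num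
        rw [this, zext, dif_pos hmem]
      rw [hz] at heq
      have hb : ‖fm‖ ≤ ‖zext (srcIdx a) f (j - 2, k + 2)‖
          + 3 * ‖zext (srcIdx a) f (j - 2 + 1, k + 2 - 1)‖ := by
        have h3 : fm = -(zext (srcIdx a) f (j - 2, k + 2)
            + 3 * zext (srcIdx a) f (j - 2 + 1, k + 2 - 1)) := by linear_combination heq
        rw [h3, norm_neg]
        calc ‖zext (srcIdx a) f (j - 2, k + 2) + 3 * zext (srcIdx a) f (j - 2 + 1, k + 2 - 1)‖
            ≤ ‖zext (srcIdx a) f (j - 2, k + 2)‖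
              + ‖3 * zext (srcIdx a) f (j - 2 + 1, k + 2 - 1)‖ := norm_add_le _ _
          _ = _ := by rw [norm_three_mul]
      have k1 := key (j - 2, k + 2)
      have k2 := key (j - 2 + 1, k + 2 - 1)
      have hv0 : vwt a (j, k) = (4:ℝ) ^ j := by
        rw [vwt]; rw [if_neg (by simpa using hd1), if_neg (by simpa using hd2)]
      have hv1 : vwt a (j - 2, k + 2) = (4:ℝ) ^ (j - 2) := by
        rw [vwt]; rw [if_neg (by simp; omega), if_neg (by simp; omega)]
      have hv2 : vwt a (j - 2 + 1, k + 2 - 1) = (4:ℝ) ^ (j - 1) := by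
        rw [vwt]; rw [if_neg (by simp; omega), if_neg (by simp; omega)]
        norm_num
        omega
      rw [hv0, hv1] at k1
      rw [hv0, hv2] at k2
      have hfin : ‖fm‖ * (4:ℝ) ^ j ≤ ‖fm‖ * ((4:ℝ) ^ (j - 2) + 3 * (4:ℝ) ^ (j - 1)) := by
        have := mul_le_mul_of_nonneg_right hb (le_of_lt (by positivity : (0:ℝ) < (4:ℝ) ^ j))
        nlinarith [norm_nonneg (zext (srcIdx a) f (j - 2, k + 2)),
          norm_nonneg (zext (srcIdx a) f (j - 2 + 1, k + 2 - 1))]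
      have hq : (4:ℝ) ^ j ≤ (4:ℝ) ^ (j - 2) + 3 * (4:ℝ) ^ (j - 1) :=
        le_of_mul_le_mul_left (by linarith [hfin]) hpos
      have e1 : (4:ℝ) ^ (j - 2) = (4:ℝ) ^ j * (4:ℝ) ^ (-2:ℤ) := by
        rw [← zpow_add₀ (by norm_num : (4:ℝ) ≠ 0)]; ring_nf
      have e2 : (4:ℝ) ^ (j - 1) = (4:ℝ) ^ j * (4:ℝ) ^ (-1:ℤ) := by
        rw [← zpow_add₀ (by norm_num : (4:ℝ) ≠ 0)]; ring_nf
      rw [e1, e2] at hq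
      have hA : (0:ℝ) < (4:ℝ) ^ j := by positivity
      have c1 : ((4:ℝ) ^ (-1:ℤ)) = 1/4 := by norm_num
      have c2 : ((4:ℝ) ^ (-2:ℤ)) = 1/16 := by norm_num
      rw [c1, c2] at hq
      linarith

/-- There is a nonzero polynomial `P` in the nine coefficients `c(p,q)` such that `Ψ_c`
is bijective whenever `P(c) ≠ 0`. -/
theorem psi_generically_bijective (a : ℤ) (ha : 2 ≤ a) :
    ∃ P : MvPolynomial (Fin 3 × Fin 3) ℂ, P ≠ 0 ∧
      ∀ c : Fin 3 × Fin 3 → ℂ, MvPolynomial.eval c P ≠ 0 →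
        Function.Bijective (PsiMap a c) := by
  classical
  refine ⟨(Bmat a ha).det, ?_, ?_⟩
  · intro hP0
    have h0 : ((Bmat a ha).map (MvPolynomial.eval cSpec)).det = 0 := by
      rw [← RingHom.mapMatrix_apply, ← RingHom.map_det, hP0, map_zero]
    obtain ⟨v, hv, hmv⟩ := Matrix.exists_mulVec_eq_zero_iff.mpr h0
    set e := eTS a ha with he
    set f : ↥(srcIdx a) → ℂ := fun s => v (e.symm s) with hfdef
    have hker : ∀ t, PsiMap a cSpec f t = 0 := by
      intro t
      rw [psi_eq_mulVec a ha]
      have hfe : (fun u => f (e u)) = v := by funext u; simp [hfdef]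
      rw [hfe, hmv]
      rfl
    have hf0 := psi_cSpec_ker a ha f hker
    apply hv
    funext u
    calc v u = f (e u) := by simp [hfdef]
      _ = 0 := by rw [hf0]; rfl
  · intro c hPc
    rw [RingHom.map_det, RingHom.mapMatrix_apply] at hPc
    set Bc := (Bmat a ha).map (MvPolynomial.eval c) with hBc
    have hu : IsUnit Bc.det := isUnit_iff_ne_zero.mpr hPc
    have hcomp : PsiMap a c =
        Bc.mulVec ∘ (fun (f : srcIdx a → ℂ) (u : ↥(tgtIdx a)) => f (eTS a ha u)) := by
      funext f t
      exact psi_eq_mulVec a ha c f t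
    rw [hcomp]
    apply Function.Bijective.comp
    · constructor
      · intro x y hxy
        have h2 : Bc⁻¹.mulVec (Bc.mulVec x) = Bc⁻¹.mulVec (Bc.mulVec y) := by rw [hxy]
        simpa [Matrix.mulVec_mulVec, Matrix.nonsing_inv_mul _ hu, Matrix.one_mulVec] using h2
      · intro y
        exact ⟨Bc⁻¹.mulVec y, by
          rw [Matrix.mulVec_mulVec, Matrix.mul_nonsing_inv _ hu, Matrix.one_mulVec]⟩
    · refine Function.bijective_iff_has_inverse.mpr
        ⟨fun g s => g ((eTS a ha).symm s), ?_, ?_⟩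
      · intro f; funext s; simp
      · intro g; funext u; simp
end
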